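/- Let (A, d, ∧) be a cdga with an increasing cdga-filtration W•, m ≥ 1, and let η₁, η₂ ∈ W₁A¹ ∩ ker d with η₁ − η₂ = da for some a ∈ W₁A⁰. Then the isomorphism exp(a ⊗ s) ∧ −: A(η₁, m) → A(η₂, m) is filtered with respect to W (where Wᵢ A(η,m) = ⊕_{j=0}^{m−1} W_{i+2j}A ⊗ k⟨s^j⟩), and the induced map on each associated graded piece Grᵢ^W is the identity. -/

import Mathlib

/-- A (positively graded) commutative differential graded algebra over a field `k`:
a grading `A : ℕ → Type` of `k`-vector spaces, a unital graded product, and a degree `+1`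
differential satisfying `d ∘ d = 0`, graded commutativity and the graded Leibniz rule. -/
structure GCDA (k : Type) [Field k] where
  A : ℕ → Type
  acg : ∀ n, AddCommGroup (A n)
  amod : ∀ n, Module k (A n)
  mul : ∀ p q : ℕ, A p → A q → A (p + q)
  one : A 0
  d : ∀ p : ℕ, A p → A (p + 1)
  d_add : ∀ p (x y : A p), d p (x + y) = d p x + d p y
  d_smul : ∀ p (c : k) (x : A p), d p (c • x) = c • d p x
  d_d : ∀ p (x : A p), d (p + 1) (d p x) = 0
  mul_add : ∀ p q (x : A p) (y z : A q), mul p q x (y + z) = mul p q x y + mul p q x z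
  add_mul : ∀ p q (x y : A p) (z : A q), mul p q (x + y) z = mul p q x z + mul p q y z
  smul_mul : ∀ p q (c : k) (x : A p) (y : A q), mul p q (c • x) y = c • mul p q x y
  mul_smul : ∀ p q (c : k) (x : A p) (y : A q), mul p q x (c • y) = c • mul p q x y
  one_mul : ∀ p (x : A p), mul 0 p one x = cast (congrArg A (Nat.zero_add p)).symm x
  mul_one : ∀ p (x : A p), mul p 0 x one = x
  mul_assoc : ∀ p q r (x : A p) (y : A q) (z : A r),
    mul (p + q) r (mul p q x y) z
      = cast (congrArg A (by omega : p + (q + r) = p + q + r)) (mul p (q + r) x (mul q r y z))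
  mul_comm : ∀ p q (x : A p) (y : A q),
    mul p q x y = cast (congrArg A (by omega : q + p = p + q))
      ((-1 : k) ^ (p * q) • mul q p y x)
  leibniz : ∀ p q (x : A p) (y : A q),
    d (p + q) (mul p q x y)
      = cast (congrArg A (by omega : p + 1 + q = p + q + 1)) (mul (p + 1) q (d p x) y)
        + cast (congrArg A (by omega : p + (q + 1) = p + q + 1))
            ((-1 : k) ^ p • mul p (q + 1) x (d q y))

attribute [instance] GCDA.acg GCDA.amod

variable {k : Type} [Field k]

/-- Left multiplication by a degree-one element, recast to land in degree `p + 1`. -/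
def GCDA.etaMul (B : GCDA k) (η : B.A 1) (p : ℕ) (x : B.A p) : B.A (p + 1) :=
  cast (congrArg B.A (by omega : 1 + p = p + 1)) (B.mul 1 p η x)

/-- The differential `d_η` of the `m`-thickening `A(η, m)`: an element of
`A^p ⊗ k[s]/(sᵐ)` is recorded as the tuple of its coefficients `(ω_0, …, ω_{m−1})`
(`ω = Σ_j ω_j ⊗ sʲ`), and `d_η(ω ⊗ φ) = dω ⊗ φ + (η ∧ ω) ⊗ sφ` becomes
`(d_η ω)_j = d(ω_j) + η ∧ ω_{j−1}`. -/
def GCDA.thickD (B : GCDA k) (η : B.A 1) (m : ℕ) (p : ℕ) (ω : Fin m → B.A p) :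
    Fin m → B.A (p + 1) := fun j =>
  B.d p (ω j) +
    (if _h : (j : ℕ) = 0 then 0
     else B.etaMul η p (ω ⟨(j : ℕ) - 1, lt_of_le_of_lt (Nat.sub_le _ _) j.isLt⟩))

/-- Powers `aⁿ` of a degree-zero element. -/
def GCDA.pow0 (B : GCDA k) (a : B.A 0) : ℕ → B.A 0
  | 0 => B.one
  | n + 1 => B.mul 0 0 a (B.pow0 a n)

/-- The coefficient `(1/n!)·aⁿ` of `sⁿ` in `exp(a ⊗ s)`. -/
noncomputable def GCDA.expCoef (B : GCDA k) (a : B.A 0) (n : ℕ) : B.A 0 :=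
  ((n.factorial : k)⁻¹) • B.pow0 a n

/-- Wedge multiplication by `exp(a ⊗ s) = Σ_{n<m} (1/n!) aⁿ ⊗ sⁿ` on the thickening. -/
noncomputable def GCDA.expWedge (B : GCDA k) (a : B.A 0) (m p : ℕ)
    (ω : Fin m → B.A p) : Fin m → B.A p := fun j =>
  ∑ i ∈ Finset.range ((j : ℕ) + 1),
    cast (congrArg B.A (Nat.zero_add p))
      (B.mul 0 p (B.expCoef a i)
        (ω ⟨(j : ℕ) - i, lt_of_le_of_lt (Nat.sub_le _ _) j.isLt⟩))

namespace GCDA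

variable {k : Type} [Field k] (B : GCDA k) (W : ℤ → ∀ p : ℕ, Submodule k (B.A p))

theorem cast_mem {p q : ℕ} (h : p = q) {n : ℤ} {x : B.A p} (hx : x ∈ W n p) :
    cast (congrArg B.A h) x ∈ W n q := by
  subst h; exact hx

theorem expCoef_zero (a : B.A 0) : B.expCoef a 0 = B.one := by
  simp [expCoef, pow0]

variable {B W}

theorem pow0_succ_mem
    (Wmul : ∀ (i i' : ℤ) (p q : ℕ) (x : B.A p) (y : B.A q),
      x ∈ W i p → y ∈ W i' q → B.mul p q x y ∈ W (i + i') (p + q))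
    {a : B.A 0} (haW : a ∈ W 1 0) (n : ℕ) : B.pow0 a (n + 1) ∈ W (n + 1) 0 := by
  induction n with
  | zero => simpa [pow0, B.mul_one] using haW
  | succ n ih =>
    have h := Wmul 1 (n + 1) 0 0 a (B.pow0 a (n + 1)) haW ih
    rwa [show (1 : ℤ) + (n + 1) = ((n + 1 : ℕ) : ℤ) + 1 by push_cast; ring] at h

theorem expCoef_succ_mem
    (Wmul : ∀ (i i' : ℤ) (p q : ℕ) (x : B.A p) (y : B.A q),
      x ∈ W i p → y ∈ W i' q → B.mul p q x y ∈ W (i + i') (p + q))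
    {a : B.A 0} (haW : a ∈ W 1 0) (n : ℕ) : B.expCoef a (n + 1) ∈ W (n + 1) 0 :=
  Submodule.smul_mem _ _ (pow0_succ_mem Wmul haW n)

noncomputable def expWedgeTerm (B : GCDA k) (a : B.A 0) {m p : ℕ} (ω : Fin m → B.A p)
    (j : Fin m) (n : ℕ) : B.A p :=
  cast (congrArg B.A (Nat.zero_add p))
    (B.mul 0 p (B.expCoef a n) (ω ⟨(j : ℕ) - n, lt_of_le_of_lt (Nat.sub_le _ _) j.isLt⟩))

theorem expWedgeTerm_zero (a : B.A 0) {m p : ℕ} (ω : Fin m → B.A p) (j : Fin m) :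
    B.expWedgeTerm a ω j 0 = ω j := by
  simp only [expWedgeTerm, expCoef_zero, B.one_mul, Nat.sub_zero, cast_cast, cast_eq]

theorem expWedge_sub_self (a : B.A 0) {m p : ℕ} (ω : Fin m → B.A p) (j : Fin m) :
    B.expWedge a m p ω j - ω j = ∑ n ∈ Finset.range j, B.expWedgeTerm a ω j (n + 1) := by
  rw [← expWedgeTerm_zero a ω j, expWedge]
  exact sub_eq_of_eq_add (Finset.sum_range_succ' _ _)

/-- `aⁿ⁺¹` adds weight `n + 1`, while lowering the `s`-degree by `n + 1` removes `2(n + 1)`. -/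
theorem expWedgeTerm_succ_mem
    (Wmono : ∀ i i' : ℤ, i ≤ i' → ∀ p, W i p ≤ W i' p)
    (Wmul : ∀ (i i' : ℤ) (p q : ℕ) (x : B.A p) (y : B.A q),
      x ∈ W i p → y ∈ W i' q → B.mul p q x y ∈ W (i + i') (p + q))
    {a : B.A 0} (haW : a ∈ W 1 0) {m p : ℕ} {i : ℤ} {ω : Fin m → B.A p}
    (hω : ∀ j : Fin m, ω j ∈ W (i + 2 * ((j : ℕ) : ℤ)) p) (j : Fin m) {n : ℕ} (hn : n < j) :
    B.expWedgeTerm a ω j (n + 1) ∈ W (i - 1 + 2 * ((j : ℕ) : ℤ)) p := by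
  have hmul := Wmul _ _ 0 p _ _ (expCoef_succ_mem Wmul haW n) (hω ⟨j - (n + 1), by omega⟩)
  refine Wmono _ _ ?_ p (cast_mem B W (Nat.zero_add p) hmul)
  push_cast [Nat.cast_sub hn]
  omega

theorem expWedge_sub_self_mem
    (Wmono : ∀ i i' : ℤ, i ≤ i' → ∀ p, W i p ≤ W i' p)
    (Wmul : ∀ (i i' : ℤ) (p q : ℕ) (x : B.A p) (y : B.A q),
      x ∈ W i p → y ∈ W i' q → B.mul p q x y ∈ W (i + i') (p + q))
    {a : B.A 0} (haW : a ∈ W 1 0) {m p : ℕ} {i : ℤ} {ω : Fin m → B.A p}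
    (hω : ∀ j : Fin m, ω j ∈ W (i + 2 * ((j : ℕ) : ℤ)) p) (j : Fin m) :
    B.expWedge a m p ω j - ω j ∈ W (i - 1 + 2 * ((j : ℕ) : ℤ)) p := by
  rw [expWedge_sub_self]
  exact Submodule.sum_mem _ fun n hn =>
    expWedgeTerm_succ_mem Wmono Wmul haW hω j (Finset.mem_range.mp hn)

end GCDA

theorem stmt_17_general {k : Type} [Field k] (B : GCDA k)
    (W : ℤ → ∀ p : ℕ, Submodule k (B.A p))
    (Wmono : ∀ i i' : ℤ, i ≤ i' → ∀ p, W i p ≤ W i' p)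
    (Wmul : ∀ (i i' : ℤ) (p q : ℕ) (x : B.A p) (y : B.A q),
      x ∈ W i p → y ∈ W i' q → B.mul p q x y ∈ W (i + i') (p + q))
    (a : B.A 0) (haW : a ∈ W 1 0)
    (m : ℕ) (i : ℤ) (p : ℕ) (ω : Fin m → B.A p)
    (hω : ∀ j : Fin m, ω j ∈ W (i + 2 * ((j : ℕ) : ℤ)) p) :
    (∀ j : Fin m, B.expWedge a m p ω j ∈ W (i + 2 * ((j : ℕ) : ℤ)) p) ∧
    (∀ j : Fin m, B.expWedge a m p ω j - ω j ∈ W (i - 1 + 2 * ((j : ℕ) : ℤ)) p) := by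
  have hgr := GCDA.expWedge_sub_self_mem Wmono Wmul haW hω
  refine ⟨fun j => ?_, hgr⟩
  have hlower : B.expWedge a m p ω j - ω j ∈ W (i + 2 * ((j : ℕ) : ℤ)) p :=
    Wmono _ _ (by omega) p (hgr j)
  simpa using Submodule.add_mem _ hlower (hω j)

/-- Let `W` be an increasing cdga-filtration of `A`, let
`η₁, η₂ ∈ W₁A¹ ∩ ker d` be cohomologous in `W₁`, say `η₁ − η₂ = da` with `a ∈ W₁A⁰`.  Then
the isomorphism `exp(a ⊗ s) ∧ − : A(η₁, m) → A(η₂, m)` is filtered with respect to the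
thickened filtration `Wᵢ = ⊕_j W_{i+2j}A ⊗ ⟨sʲ⟩`, and it induces the identity on each
`W`-graded piece, i.e. `exp(a ⊗ s) ∧ ω − ω ∈ W_{i−1}` for `ω ∈ Wᵢ`. -/
theorem stmt_17 {k : Type} [Field k] [CharZero k] (B : GCDA k)
    (W : ℤ → ∀ p : ℕ, Submodule k (B.A p))
    (Wmono : ∀ i i' : ℤ, i ≤ i' → ∀ p, W i p ≤ W i' p)
    (Wd : ∀ (i : ℤ) (p : ℕ) (x : B.A p), x ∈ W i p → B.d p x ∈ W i (p + 1))
    (Wmul : ∀ (i i' : ℤ) (p q : ℕ) (x : B.A p) (y : B.A q),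
      x ∈ W i p → y ∈ W i' q → B.mul p q x y ∈ W (i + i') (p + q))
    (η₁ η₂ : B.A 1) (h₁ : B.d 1 η₁ = 0) (h₂ : B.d 1 η₂ = 0)
    (hη₁W : η₁ ∈ W 1 1) (hη₂W : η₂ ∈ W 1 1)
    (a : B.A 0) (ha : B.d 0 a = η₁ - η₂) (haW : a ∈ W 1 0)
    (m : ℕ) (hm : 1 ≤ m) (i : ℤ) (p : ℕ) (ω : Fin m → B.A p)
    (hω : ∀ j : Fin m, ω j ∈ W (i + 2 * ((j : ℕ) : ℤ)) p) :
    (∀ j : Fin m, B.expWedge a m p ω j ∈ W (i + 2 * ((j : ℕ) : ℤ)) p) ∧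
    (∀ j : Fin m, B.expWedge a m p ω j - ω j ∈ W (i - 1 + 2 * ((j : ℕ) : ℤ)) p) :=
  stmt_17_general B W Wmono Wmul a haW m i p ω hω
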